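/- Let R be a nonassociative ring with an additive surjection σ and an additive map δ satisfying σ(1)=1 and δ(1)=0. Then the generalized polynomial ring R[X;σ,δ] satisfies the left Euclidean division algorithm. -/

import Mathlib

open Finset
open scoped Classical

section Defs

variable {R : Type*} {S : Type*}

/-- Iterated power: `pw x 0 = 1`, `pw x (n+1) = pw x n * x`. -/
def pw [One S] [Mul S] (x : S) : ℕ → S
  | 0 => 1
  | n + 1 => pw x n * x

/-- `x` is power-associative. -/
def PowAssoc [One S] [Mul S] (x : S) : Prop := ∀ m n : ℕ, pw x m * pw x n = pw x (m + n)

variable [NonAssocRing R] [NonAssocRing S]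

/-- Interpret a finitely supported coefficient family as a left polynomial `Σ f(cᵢ)·xⁱ`. -/
noncomputable def lpoly (f : R →+* S) (x : S) (c : ℕ →₀ R) : S :=
  c.sum fun i r => f r * pw x i

/-- Right polynomial `Σ xⁱ·f(cᵢ)`. -/
noncomputable def rpoly (f : R →+* S) (x : S) (c : ℕ →₀ R) : S :=
  c.sum fun i r => pw x i * f r

/-- Left degree (`⊥` plays the role of `-∞`), computed from a representation as a
left polynomial in `x` (unique when `{1,x,x²,…}` is a left basis). -/
noncomputable def degl (f : R →+* S) (x : S) (p : S) : WithBot ℕ :=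
  if h : ∃ c : ℕ →₀ R, lpoly f x c = p then (Classical.choose h).support.max else ⊥

/-- Left leading coefficient (`0` for the zero polynomial). -/
noncomputable def lcl (f : R →+* S) (x : S) (p : S) : R :=
  if h : ∃ c : ℕ →₀ R, lpoly f x c = p then
    (Classical.choose h) (WithBot.unbotD 0 (Classical.choose h).support.max) else 0

/-- Right degree. -/
noncomputable def degr (f : R →+* S) (x : S) (p : S) : WithBot ℕ :=
  if h : ∃ c : ℕ →₀ R, rpoly f x c = p then (Classical.choose h).support.max else ⊥

/-- Right leading coefficient. -/
noncomputable def lcr (f : R →+* S) (x : S) (p : S) : R :=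
  if h : ∃ c : ℕ →₀ R, rpoly f x c = p then
    (Classical.choose h) (WithBot.unbotD 0 (Classical.choose h).support.max) else 0

/-- `(S,x)` is a left generalized nonassociative Ore extension of `R`
(with the embedding `f : R →+* S`). -/
structure IsLeftGNOE (f : R →+* S) (x : S) : Prop where
  inj : Function.Injective f
  powAssoc : PowAssoc x
  basis : Function.Bijective (lpoly f x)
  closed : ∀ (m n : ℕ) (r s : R), ∃ c : ℕ →₀ R,
    lpoly f x c = (f r * pw x m) * (f s * pw x n) ∧ ∀ i, m + n < i → c i = 0

/-- `(S,x)` is a right generalized nonassociative Ore extension of `R`. -/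
structure IsRightGNOE (f : R →+* S) (x : S) : Prop where
  inj : Function.Injective f
  powAssoc : PowAssoc x
  basis : Function.Bijective (rpoly f x)
  closed : ∀ (m n : ℕ) (r s : R), ∃ c : ℕ →₀ R,
    rpoly f x c = (pw x m * f r) * (pw x n * f s) ∧ ∀ i, m + n < i → c i = 0

/-- Right ideal of a (nonassociative) ring. -/
def IsRightIdeal (T : Type*) [NonAssocRing T] (I : Set T) : Prop :=
  (0 : T) ∈ I ∧ (∀ a b, a ∈ I → b ∈ I → a + b ∈ I) ∧ (∀ a, a ∈ I → -a ∈ I) ∧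
    ∀ a t, a ∈ I → a * t ∈ I

/-- Left ideal of a (nonassociative) ring. -/
def IsLeftIdeal (T : Type*) [NonAssocRing T] (I : Set T) : Prop :=
  (0 : T) ∈ I ∧ (∀ a b, a ∈ I → b ∈ I → a + b ∈ I) ∧ (∀ a, a ∈ I → -a ∈ I) ∧
    ∀ a t, a ∈ I → t * a ∈ I

/-- The right ideal generated by a set. -/
def rIdealGen (T : Type*) [NonAssocRing T] (G : Set T) : Set T :=
  ⋂₀ {I : Set T | IsRightIdeal T I ∧ G ⊆ I}

/-- The left ideal generated by a set. -/
def lIdealGen (T : Type*) [NonAssocRing T] (G : Set T) : Set T :=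
  ⋂₀ {I : Set T | IsLeftIdeal T I ∧ G ⊆ I}

/-- Right Noetherian: every right ideal is finitely generated. -/
def RightNoeth (T : Type*) [NonAssocRing T] : Prop :=
  ∀ I : Set T, IsRightIdeal T I → ∃ G : Finset T, I = rIdealGen T ↑G

/-- Left Noetherian: every left ideal is finitely generated. -/
def LeftNoeth (T : Type*) [NonAssocRing T] : Prop :=
  ∀ I : Set T, IsLeftIdeal T I → ∃ G : Finset T, I = lIdealGen T ↑G

/-- `M` is a right `R`-submodule of `S` (via `f`). -/
def IsRightRSub (f : R →+* S) (M : Set S) : Prop :=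
  (0 : S) ∈ M ∧ (∀ a b, a ∈ M → b ∈ M → a + b ∈ M) ∧ (∀ a, a ∈ M → -a ∈ M) ∧
    ∀ a r, a ∈ M → a * f r ∈ M

/-- `M` is a left `R`-submodule of `S` (via `f`). -/
def IsLeftRSub (f : R →+* S) (M : Set S) : Prop :=
  (0 : S) ∈ M ∧ (∀ a b, a ∈ M → b ∈ M → a + b ∈ M) ∧ (∀ a, a ∈ M → -a ∈ M) ∧
    ∀ a r, a ∈ M → f r * a ∈ M

/-- The right `R`-submodule of `S` generated by a set. -/
def rSubGen (f : R →+* S) (G : Set S) : Set S :=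
  ⋂₀ {M : Set S | IsRightRSub f M ∧ G ⊆ M}

/-- `s` belongs to the right ideal of `S` generated by `p 0, …, p (n-1)` and admits a
left-degree-additive representation `s = Σⱼ (⋯((p_{iⱼ} s_{j1})s_{j2})⋯)s_{jm}` whose degree
bound `max_j (deg_l p_{iⱼ} + Σₖ deg_l s_{jk})` equals `deg_l s`. -/
def LDegAddMem (f : R →+* S) (x : S) {n : ℕ} (p : Fin n → S) (s : S) : Prop :=
  ∃ L : List (Fin n × List S),
    s = (L.map fun t => t.2.foldl (· * ·) (p t.1)).sum ∧
    degl f x s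
      = (L.map fun t => degl f x (p t.1) + (t.2.map (degl f x)).sum).foldr max ⊥

/-- `s` belongs to the left ideal of `S` generated by `p 0, …, p (n-1)` and admits a
right-degree-additive representation. -/
def RDegAddMem (f : R →+* S) (x : S) {n : ℕ} (p : Fin n → S) (s : S) : Prop :=
  ∃ L : List (Fin n × List S),
    s = (L.map fun t => t.2.foldl (fun b a => a * b) (p t.1)).sum ∧
    degr f x s
      = (L.map fun t => degr f x (p t.1) + (t.2.map (degr f x)).sum).foldr max ⊥

/-- The left Euclidean division algorithm for `(S,x)` over `R`. -/
def LeftEDA (f : R →+* S) (x : S) : Prop :=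
  ∀ (n : ℕ) (p : Fin n → S) (q : S), q ≠ 0 →
    (∀ i, degl f x (p i) ≤ degl f x q) →
    lcl f x q ∈ rIdealGen R (Set.range fun i => lcl f x (p i)) →
    ∃ s, LDegAddMem f x p s ∧ degl f x (q - s) < degl f x q

/-- The right Euclidean division algorithm for `(S,x)` over `R`. -/
def RightEDA (f : R →+* S) (x : S) : Prop :=
  ∀ (n : ℕ) (p : Fin n → S) (q : S), q ≠ 0 →
    (∀ i, degr f x (p i) ≤ degr f x q) →
    lcr f x q ∈ lIdealGen R (Set.range fun i => lcr f x (p i)) →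
    ∃ s, RDegAddMem f x p s ∧ degr f x (q - s) < degr f x q

/-- The maps `πᵢᵐ`: the sum of all `C(m,i)` compositions of `i` copies of `σ`
and `m - i` copies of `δ`. -/
def pimap (σ δ : R → R) : ℕ → ℕ → R → R
  | 0, 0 => id
  | _ + 1, 0 => fun _ => 0
  | 0, m + 1 => fun r => δ (pimap σ δ 0 m r)
  | i + 1, m + 1 => fun r => σ (pimap σ δ i m r) + δ (pimap σ δ (i + 1) m r)

/-- `(S,x)` realizes the generalized polynomial ring `R[X;σ,δ]`: `{1,x,x²,…}` is a left
`R`-basis and multiplication is given by `(rxᵐ)(sxⁿ) = Σᵢ (r πᵢᵐ(s)) x^{i+n}`. -/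
def IsGPolyRing (σ δ : R → R) (f : R →+* S) (x : S) : Prop :=
  Function.Injective f ∧ PowAssoc x ∧ Function.Bijective (lpoly f x) ∧
    ∀ (r s : R) (m n : ℕ),
      (f r * pw x m) * (f s * pw x n)
        = ∑ i ∈ Finset.range (m + 1), f (r * pimap σ δ i m s) * pw x (i + n)

/-- `(S,x)` realizes the flipped generalized polynomial ring `R[X;σ,δ]^fl`:
multiplication is given by `(rxᵐ)(sxⁿ) = Σᵢ τₙ(r, πᵢᵐ(s)) x^{i+n}`. -/
def IsFlipGPolyRing (σ δ : R → R) (f : R →+* S) (x : S) : Prop :=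
  Function.Injective f ∧ PowAssoc x ∧ Function.Bijective (lpoly f x) ∧
    ∀ (r s : R) (m n : ℕ),
      (f r * pw x m) * (f s * pw x n)
        = ∑ i ∈ Finset.range (m + 1),
            f (if Even n then r * pimap σ δ i m s else pimap σ δ i m s * r) * pw x (i + n)

end Defs

section Aux

variable {R S : Type*} [NonAssocRing R] [NonAssocRing S] (f : R →+* S) (x : S)

lemma lpoly_single (k : ℕ) (r : R) : lpoly f x (Finsupp.single k r) = f r * pw x k :=
  Finsupp.sum_single_index (by simp)

lemma lpoly_add (c d : ℕ →₀ R) : lpoly f x (c + d) = lpoly f x c + lpoly f x d :=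
  Finsupp.sum_add_index' (by simp) (by intro a b₁ b₂; rw [map_add, add_mul])

/-- `lpoly` as an additive monoid hom. -/
noncomputable def lpolyHom : (ℕ →₀ R) →+ S where
  toFun := lpoly f x
  map_zero' := by simp [lpoly]
  map_add' := lpoly_add f x

lemma lpoly_neg (c : ℕ →₀ R) : lpoly f x (-c) = -lpoly f x c :=
  map_neg (lpolyHom f x) c

lemma lpoly_sub (c d : ℕ →₀ R) : lpoly f x (c - d) = lpoly f x c - lpoly f x d :=
  map_sub (lpolyHom f x) c d

lemma degl_lpoly (hinj : Function.Injective (lpoly f x)) (c : ℕ →₀ R) :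
    degl f x (lpoly f x c) = c.support.max := by
  unfold degl
  rw [dif_pos ⟨c, rfl⟩]
  have hc : Classical.choose (⟨c, rfl⟩ : ∃ d : ℕ →₀ R, lpoly f x d = lpoly f x c) = c :=
    hinj (Classical.choose_spec (⟨c, rfl⟩ : ∃ d : ℕ →₀ R, lpoly f x d = lpoly f x c))
  rw [hc]

lemma lcl_lpoly (hinj : Function.Injective (lpoly f x)) (c : ℕ →₀ R) :
    lcl f x (lpoly f x c) = c (WithBot.unbotD 0 c.support.max) := by
  unfold lcl
  rw [dif_pos ⟨c, rfl⟩]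
  have hc : Classical.choose (⟨c, rfl⟩ : ∃ d : ℕ →₀ R, lpoly f x d = lpoly f x c) = c :=
    hinj (Classical.choose_spec (⟨c, rfl⟩ : ∃ d : ℕ →₀ R, lpoly f x d = lpoly f x c))
  rw [hc]

variable (σ δ : R → R)

lemma pimap_gt (hσadd : ∀ a b : R, σ (a + b) = σ a + σ b)
    (hδadd : ∀ a b : R, δ (a + b) = δ a + δ b) :
    ∀ m i : ℕ, m < i → ∀ r : R, pimap σ δ i m r = 0 := by
  have hσ0 : σ 0 = 0 := by
    have h := hσadd 0 0; rw [add_zero] at h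
    have h2 : σ 0 + σ 0 = σ 0 + 0 := by rw [add_zero]; exact h.symm
    exact add_left_cancel h2
  have hδ0 : δ 0 = 0 := by
    have h := hδadd 0 0; rw [add_zero] at h
    have h2 : δ 0 + δ 0 = δ 0 + 0 := by rw [add_zero]; exact h.symm
    exact add_left_cancel h2
  intro m
  induction m with
  | zero => intro i hi r; obtain ⟨j, rfl⟩ := Nat.exists_eq_add_of_lt hi; simp [pimap]
  | succ m ih =>
    intro i hi r
    obtain ⟨j, rfl⟩ := Nat.exists_eq_add_of_lt hi
    show pimap σ δ (m + 1 + j + 1 - 1 + 1) (m + 1) r = 0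
    have h1 : m + 1 + j + 1 - 1 + 1 = (m + j + 1) + 1 := by omega
    rw [h1]
    show σ (pimap σ δ (m + j + 1) m r) + δ (pimap σ δ (m + j + 1 + 1) m r) = 0
    rw [ih _ (by omega) r, ih _ (by omega) r, hσ0, hδ0, add_zero]

lemma pimap_diag (hσadd : ∀ a b : R, σ (a + b) = σ a + σ b)
    (hδadd : ∀ a b : R, δ (a + b) = δ a + δ b) :
    ∀ m : ℕ, ∀ r : R, pimap σ δ m m r = σ^[m] r := by
  have hδ0 : δ 0 = 0 := by
    have h := hδadd 0 0; rw [add_zero] at h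
    have h2 : δ 0 + δ 0 = δ 0 + 0 := by rw [add_zero]; exact h.symm
    exact add_left_cancel h2
  intro m
  induction m with
  | zero => intro r; simp [pimap]
  | succ m ih =>
    intro r
    show σ (pimap σ δ m m r) + δ (pimap σ δ (m + 1) m r) = σ^[m+1] r
    rw [ih, pimap_gt σ δ hσadd hδadd m (m+1) (by omega), hδ0, add_zero,
      Function.iterate_succ_apply']

/-- The coefficient family of `lpoly c * (f t * x^k)`. -/
noncomputable def mulCoeff (c : ℕ →₀ R) (t : R) (k : ℕ) : ℕ →₀ R :=
  c.sum fun j r => ∑ i ∈ Finset.range (j + 1), Finsupp.single (i + k) (r * pimap σ δ i j t)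

lemma lpoly_mulCoeff (hmul : ∀ (r s : R) (m n : ℕ),
      (f r * pw x m) * (f s * pw x n)
        = ∑ i ∈ Finset.range (m + 1), f (r * pimap σ δ i m s) * pw x (i + n))
    (c : ℕ →₀ R) (t : R) (k : ℕ) :
    lpoly f x (mulCoeff σ δ c t k) = lpoly f x c * (f t * pw x k) := by
  rw [mulCoeff, show lpoly f x (c.sum fun j r => ∑ i ∈ Finset.range (j + 1),
        Finsupp.single (i + k) (r * pimap σ δ i j t))
      = lpolyHom f x (c.sum fun j r => ∑ i ∈ Finset.range (j + 1),
        Finsupp.single (i + k) (r * pimap σ δ i j t)) from rfl,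
    map_finsuppSum]
  rw [show lpoly f x c * (f t * pw x k) = c.sum fun j r => (f r * pw x j) * (f t * pw x k) from
    Finsupp.sum_mul _ _ ]
  refine Finsupp.sum_congr fun j _ => ?_
  rw [map_sum, hmul]
  refine Finset.sum_congr rfl fun i _ => ?_
  exact lpoly_single f x _ _

lemma mulCoeff_apply (c : ℕ →₀ R) (t : R) (k m : ℕ) :
    mulCoeff σ δ c t k m
      = c.sum fun j r => ∑ i ∈ Finset.range (j + 1),
          if i + k = m then r * pimap σ δ i j t else 0 := by
  rw [mulCoeff, Finsupp.sum_apply]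
  refine Finsupp.sum_congr fun j _ => ?_
  rw [Finset.sum_apply']
  exact Finset.sum_congr rfl fun i _ => Finsupp.single_apply

lemma mulCoeff_high (c : ℕ →₀ R) (t : R) (k d : ℕ) (hc : ∀ j, d < j → c j = 0)
    (m : ℕ) (hm : d + k < m) : mulCoeff σ δ c t k m = 0 := by
  rw [mulCoeff_apply]
  refine Finset.sum_eq_zero fun j hj => ?_
  refine Finset.sum_eq_zero fun i hi => ?_
  rw [if_neg]
  rcases Nat.lt_or_ge d j with h | h
  · exact absurd (hc j h) (Finsupp.mem_support_iff.mp hj)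
  · have : i ≤ j := Nat.lt_succ_iff.mp (Finset.mem_range.mp hi)
    omega

lemma mulCoeff_top (hσadd : ∀ a b : R, σ (a + b) = σ a + σ b)
    (hδadd : ∀ a b : R, δ (a + b) = δ a + δ b)
    (c : ℕ →₀ R) (t : R) (k d : ℕ) (hc : ∀ j, d < j → c j = 0) :
    mulCoeff σ δ c t k (d + k) = c d * σ^[d] t := by
  rw [mulCoeff_apply, Finsupp.sum]
  have hzero : ∀ j ∈ c.support, j ≠ d →
      (∑ i ∈ Finset.range (j + 1), if i + k = d + k then c j * pimap σ δ i j t else 0) = 0 := by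
    intro j hj hjne
    have hjd : j ≤ d := by
      by_contra h
      exact (Finsupp.mem_support_iff.mp hj) (hc j (by omega))
    refine Finset.sum_eq_zero fun i hi => ?_
    have : i ≤ j := Nat.lt_succ_iff.mp (Finset.mem_range.mp hi)
    rw [if_neg (by omega)]
  by_cases hd : d ∈ c.support
  · rw [Finset.sum_eq_single d hzero (fun h => absurd hd h)]
    rw [Finset.sum_eq_single d (fun i hi hine => by rw [if_neg (by omega)])
      (fun h => absurd (Finset.mem_range.mpr (by omega)) h)]
    rw [if_pos rfl, pimap_diag σ δ hσadd hδadd]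
  · have h0 : c d = 0 := Finsupp.notMem_support_iff.mp hd
    rw [h0, zero_mul]
    exact Finset.sum_eq_zero fun j hj => hzero j hj (fun h => hd (h ▸ hj))

lemma foldr_max_le (D : WithBot ℕ) :
    ∀ (l : List (WithBot ℕ)), (∀ a ∈ l, a ≤ D) → l.foldr max ⊥ ≤ D := by
  intro l
  induction l with
  | nil => intro _; simp
  | cons a l ih =>
    intro h
    simp only [List.foldr_cons]
    exact max_le (h a (by simp)) (ih fun b hb => h b (List.mem_cons_of_mem a hb))

lemma pw_zero : pw x 0 = 1 := rfl

lemma list_sum_map_neg {α : Type*} (g : α → S) (L : List α) :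
    (L.map fun a => -(g a)).sum = -((L.map g).sum) := by
  induction L with
  | nil => simp
  | cons a l ih => rw [List.map_cons, List.sum_cons, List.map_cons, List.sum_cons, ih, neg_add]

lemma list_sum_map_mul {α : Type*} (g : α → S) (y : S) (L : List α) :
    (L.map fun a => g a * y).sum = ((L.map g)).sum * y := by
  induction L with
  | nil => simp
  | cons a l ih => simp [ih, add_mul]

end Aux

/-- `R[X;σ,δ]` with `σ` an additive surjection satisfies the
left Euclidean division algorithm. -/
theorem stmt11 {R S : Type*} [NonAssocRing R] [NonAssocRing S] (f : R →+* S) (x : S) (σ δ : R → R)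
    (hσadd : ∀ a b : R, σ (a + b) = σ a + σ b) (hδadd : ∀ a b : R, δ (a + b) = δ a + δ b)
    (hσ1 : σ 1 = 1) (hδ1 : δ 1 = 0)
    (hσsurj : Function.Surjective σ)
    (hpoly : IsGPolyRing σ δ f x) :
    LeftEDA f x := by
  obtain ⟨hinjf, hpa, hbij, hmul⟩ := hpoly
  have hinj : Function.Injective (lpoly f x) := hbij.1
  have hlp0 : lpoly f x 0 = 0 := map_zero (lpolyHom f x)
  intro n p q hq hdeg hlc
  -- representation of q
  obtain ⟨cq, hcq⟩ := hbij.2 q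
  have hcq0 : cq ≠ 0 := fun h => hq (by rw [← hcq, h, hlp0])
  obtain ⟨D, hD⟩ := Finset.max_of_nonempty (Finsupp.support_nonempty_iff.mpr hcq0)
  have hdeglq : degl f x q = (D : WithBot ℕ) := by
    rw [← hcq, degl_lpoly f x hinj, hD, Nat.cast_withBot]
  have hcqHigh : ∀ j, D < j → cq j = 0 := by
    intro j hj
    by_contra h
    have := Finset.le_max (Finsupp.mem_support_iff.mpr h)
    rw [hD] at this
    exact absurd (WithBot.coe_le_coe.mp this) (by omega)
  have hlcq : lcl f x q = cq D := by
    rw [← hcq, lcl_lpoly f x hinj, hD]; rfl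
  have hlcq0 : cq D ≠ 0 :=
    Finsupp.mem_support_iff.mp (Finset.mem_of_max hD)
  -- R is nontrivial
  have h1 : (1 : R) ≠ 0 := by
    intro h
    apply hcq0
    ext m
    calc cq m = cq m * 1 := (mul_one _).symm
    _ = 0 := by rw [h, mul_zero]
  have hσ0 : σ 0 = 0 := by
    have h := hσadd 0 0; rw [add_zero] at h
    have h2 : σ 0 + σ 0 = σ 0 + 0 := by rw [add_zero]; exact h.symm
    exact add_left_cancel h2
  have hit0 : ∀ d : ℕ, σ^[d] 0 = 0 := fun d => Function.iterate_fixed hσ0 d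
  have hitsurj : ∀ d : ℕ, Function.Surjective (σ^[d]) := fun d => hσsurj.iterate d
  have hdeglmon : ∀ (t : R) (k : ℕ), t ≠ 0 → degl f x (f t * pw x k) = (k : WithBot ℕ) := by
    intro t k ht
    rw [← lpoly_single, degl_lpoly f x hinj, Finsupp.support_single_ne_zero _ ht,
      Finset.max_singleton, Nat.cast_withBot]
  have hft : ∀ t : R, f t * pw x 0 = f t := fun t => by rw [pw_zero, mul_one]
  have hdeglft : ∀ t : R, degl f x (f t) ≤ (0 : WithBot ℕ) := by
    intro t
    by_cases ht : t = 0
    · rw [ht, map_zero, ← hlp0, degl_lpoly f x hinj]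
      simp
    · rw [← hft t, hdeglmon t 0 ht]
      simp
  have hdeglz : degl f x (0 : S) = ⊥ := by
    rw [← hlp0, degl_lpoly f x hinj]; simp
  have hlclz : lcl f x (0 : S) = 0 := by
    rw [← hlp0, lcl_lpoly f x hinj]; simp
  have hnegone : (-1 : S) = f (-1) * pw x 0 := by
    rw [hft, map_neg, map_one]
  have hdeglneg : degl f x (-1 : S) = (0 : WithBot ℕ) := by
    rw [hnegone]
    exact hdeglmon _ 0 (neg_ne_zero.mpr h1)
  -- the set of realizable leading coefficients
  set Rep : S → R → Prop := fun s b =>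
    ∃ c : ℕ →₀ R, lpoly f x c = s ∧ (∀ m, D < m → c m = 0) ∧ c D = b with hRep
  set Good : Set R := {b | ∃ L : List (Fin n × List S),
    (∀ t ∈ L, degl f x (p t.1) + (t.2.map (degl f x)).sum ≤ (D : WithBot ℕ)) ∧
    Rep ((L.map fun t => t.2.foldl (· * ·) (p t.1)).sum) b} with hGood
  -- Rep is closed under right multiplication by constants
  have hkey : ∀ (s : S) (b : R) (t : R), Rep s b → Rep (s * f t) (b * σ^[D] t) := by
    rintro s b t ⟨c, rfl, hhigh, rfl⟩
    refine ⟨mulCoeff σ δ c t 0, ?_, ?_, ?_⟩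
    · rw [lpoly_mulCoeff f x σ δ hmul, hft]
    · intro m hm
      exact mulCoeff_high σ δ c t 0 D hhigh m (by omega)
    · have h := mulCoeff_top σ δ hσadd hδadd c t 0 D hhigh
      simpa using h
  -- Good is a right ideal
  have hzero : (0 : R) ∈ Good := by
    refine ⟨[], by simp, 0, by simpa using hlp0, by simp, by simp⟩
  have hadd : ∀ a b, a ∈ Good → b ∈ Good → a + b ∈ Good := by
    rintro a b ⟨L1, hb1, c1, hc1, hh1, hd1⟩ ⟨L2, hb2, c2, hc2, hh2, hd2⟩
    refine ⟨L1 ++ L2, ?_, c1 + c2, ?_, ?_, ?_⟩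
    · intro t ht
      rcases List.mem_append.mp ht with h | h
      · exact hb1 t h
      · exact hb2 t h
    · rw [lpoly_add, hc1, hc2, List.map_append, List.sum_append]
    · intro m hm
      rw [Finsupp.add_apply, hh1 m hm, hh2 m hm, add_zero]
    · rw [Finsupp.add_apply, hd1, hd2]
  have hneg : ∀ a, a ∈ Good → -a ∈ Good := by
    rintro a ⟨L, hb, c, hc, hh, hd⟩
    refine ⟨L.map fun t => (t.1, t.2 ++ [(-1 : S)]), ?_, -c, ?_, ?_, ?_⟩
    · intro t ht
      obtain ⟨u, hu, rfl⟩ := List.mem_map.mp ht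
      have : ((u.2 ++ [(-1 : S)]).map (degl f x)).sum = (u.2.map (degl f x)).sum := by
        rw [List.map_append, List.sum_append]
        simp [hdeglneg]
      rw [this]
      exact hb u hu
    · rw [lpoly_neg, hc]
      rw [List.map_map]
      have heq : ((fun t : Fin n × List S => t.2.foldl (· * ·) (p t.1)) ∘
          fun t : Fin n × List S => (t.1, t.2 ++ [(-1 : S)]))
          = fun t : Fin n × List S => -(t.2.foldl (· * ·) (p t.1)) := by
        funext u
        show (u.2 ++ [(-1 : S)]).foldl (· * ·) (p u.1) = _
        rw [List.foldl_append]
        show u.2.foldl (· * ·) (p u.1) * (-1) = _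
        rw [mul_neg_one]
      rw [heq, list_sum_map_neg]
    · intro m hm
      rw [Finsupp.neg_apply, hh m hm, neg_zero]
    · rw [Finsupp.neg_apply, hd]
  have hrmul : ∀ a r, a ∈ Good → a * r ∈ Good := by
    rintro a r ⟨L, hb, hrep⟩
    obtain ⟨t, ht⟩ := hitsurj D r
    refine ⟨L.map fun u => (u.1, u.2 ++ [f t]), ?_, ?_⟩
    · intro u hu
      obtain ⟨v, hv, rfl⟩ := List.mem_map.mp hu
      have : ((v.2 ++ [f t]).map (degl f x)).sum
          = (v.2.map (degl f x)).sum + (degl f x (f t) + 0) := by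
        rw [List.map_append, List.sum_append]; rfl
      rw [this]
      calc degl f x (p v.1) + ((v.2.map (degl f x)).sum + (degl f x (f t) + 0))
          ≤ degl f x (p v.1) + ((v.2.map (degl f x)).sum + (0 + 0)) := by
            refine add_le_add_right (add_le_add_right (add_le_add_left (hdeglft t) 0) _) _
        _ = degl f x (p v.1) + (v.2.map (degl f x)).sum := by rw [add_zero, add_zero]
        _ ≤ (D : WithBot ℕ) := hb v hv
    · rw [List.map_map]
      have heq : ((fun u : Fin n × List S => u.2.foldl (· * ·) (p u.1)) ∘
          fun u : Fin n × List S => (u.1, u.2 ++ [f t]))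
          = fun u : Fin n × List S => (u.2.foldl (· * ·) (p u.1)) * f t := by
        funext u
        show (u.2 ++ [f t]).foldl (· * ·) (p u.1) = _
        rw [List.foldl_append]
        rfl
      rw [heq, list_sum_map_mul]
      rw [← ht]
      exact hkey _ _ t hrep
  have hideal : IsRightIdeal R Good := ⟨hzero, hadd, hneg, hrmul⟩
  -- generators belong to Good
  have hgen : ∀ i, lcl f x (p i) ∈ Good := by
    intro i
    by_cases hpi : p i = 0
    · rw [hpi, hlclz]
      exact hzero
    obtain ⟨ci, hci⟩ := hbij.2 (p i)
    have hci0 : ci ≠ 0 := fun h => hpi (by rw [← hci, h, hlp0])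
    obtain ⟨di, hdi⟩ := Finset.max_of_nonempty (Finsupp.support_nonempty_iff.mpr hci0)
    have hdeglpi : degl f x (p i) = (di : WithBot ℕ) := by
      rw [← hci, degl_lpoly f x hinj, hdi, Nat.cast_withBot]
    have hdiD : di ≤ D := by
      have := hdeg i
      rw [hdeglpi, hdeglq, Nat.cast_withBot, Nat.cast_withBot] at this
      exact WithBot.coe_le_coe.mp this
    have hciHigh : ∀ j, di < j → ci j = 0 := by
      intro j hj
      by_contra h
      have := Finset.le_max (Finsupp.mem_support_iff.mpr h)
      rw [hdi] at this
      exact absurd (WithBot.coe_le_coe.mp this) (by omega)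
    have hlcpi : lcl f x (p i) = ci di := by
      rw [← hci, lcl_lpoly f x hinj, hdi]; rfl
    obtain ⟨t, ht⟩ := hitsurj di 1
    have ht0 : t ≠ 0 := by
      intro h
      rw [h, hit0] at ht
      exact h1 ht.symm
    refine ⟨[(i, [f t * pw x (D - di)])], ?_, ?_⟩
    · intro u hu
      rw [List.mem_singleton] at hu
      subst hu
      show degl f x (p i) + (degl f x (f t * pw x (D - di)) + 0) ≤ (D : WithBot ℕ)
      rw [hdeglpi, hdeglmon t (D - di) ht0, add_zero, Nat.cast_withBot, Nat.cast_withBot,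
        Nat.cast_withBot, ← WithBot.coe_add]
      exact WithBot.coe_le_coe.mpr (by omega)
    · show Rep ([(p i * (f t * pw x (D - di)))].sum) (lcl f x (p i))
      rw [List.sum_singleton, hlcpi]
      refine ⟨mulCoeff σ δ ci t (D - di), ?_, ?_, ?_⟩
      · rw [lpoly_mulCoeff f x σ δ hmul, hci]
      · intro m hm
        exact mulCoeff_high σ δ ci t (D - di) di hciHigh m (by omega)
      · have h := mulCoeff_top σ δ hσadd hδadd ci t (D - di) di hciHigh
        rw [ht, mul_one] at h
        have h2 : di + (D - di) = D := by omega
        rw [h2] at h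
        exact h
  -- hence lcl q ∈ Good
  have hmem : lcl f x q ∈ Good := by
    refine Set.mem_sInter.mp hlc Good ⟨hideal, ?_⟩
    rintro b ⟨i, rfl⟩
    exact hgen i
  obtain ⟨L0, hL0b, cs, hcs, hcsHigh, hcsD⟩ := hmem
  -- there is a nonzero p j
  have hex : ∃ j, p j ≠ 0 := by
    by_contra h
    push_neg at h
    have hz : IsRightIdeal R {(0 : R)} := by
      refine ⟨rfl, ?_, ?_, ?_⟩
      · intro a b ha hb
        rw [Set.mem_singleton_iff] at ha hb ⊢
        rw [ha, hb, add_zero]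
      · intro a ha
        rw [Set.mem_singleton_iff] at ha ⊢
        rw [ha, neg_zero]
      · intro a t ha
        rw [Set.mem_singleton_iff] at ha ⊢
        rw [ha, zero_mul]
    have hq0 : lcl f x q ∈ ({0} : Set R) := by
      refine Set.mem_sInter.mp hlc _ ⟨hz, ?_⟩
      rintro b ⟨i, rfl⟩
      show lcl f x (p i) ∈ ({0} : Set R)
      rw [Set.mem_singleton_iff, h i, hlclz]
    rw [Set.mem_singleton_iff, hlcq] at hq0
    exact hlcq0 hq0
  obtain ⟨j, hpj⟩ := hex
  obtain ⟨cj, hcj⟩ := hbij.2 (p j)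
  have hcj0 : cj ≠ 0 := fun h => hpj (by rw [← hcj, h, hlp0])
  obtain ⟨dj, hdj⟩ := Finset.max_of_nonempty (Finsupp.support_nonempty_iff.mpr hcj0)
  have hdeglpj : degl f x (p j) = (dj : WithBot ℕ) := by
    rw [← hcj, degl_lpoly f x hinj, hdj, Nat.cast_withBot]
  have hdjD : dj ≤ D := by
    have := hdeg j
    rw [hdeglpj, hdeglq, Nat.cast_withBot, Nat.cast_withBot] at this
    exact WithBot.coe_le_coe.mp this
  set u : S := f 1 * pw x (D - dj) with hu
  have hdeglu : degl f x u = ((D - dj : ℕ) : WithBot ℕ) := hdeglmon 1 (D - dj) h1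
  set L : List (Fin n × List S) := (j, [u]) :: (j, [u, (-1 : S)]) :: L0 with hL
  set s : S := (L.map fun t => t.2.foldl (· * ·) (p t.1)).sum with hs
  have hscs : s = lpoly f x cs := by
    rw [hs, hL]
    show p j * u + ((p j * u) * (-1) + (L0.map fun t => t.2.foldl (· * ·) (p t.1)).sum)
      = lpoly f x cs
    rw [mul_neg_one, hcs, add_neg_cancel_left]
  have hdegls : degl f x s = (D : WithBot ℕ) := by
    rw [hscs, degl_lpoly f x hinj]
    refine le_antisymm (Finset.max_le ?_) ?_
    · intro a ha
      rw [Nat.cast_withBot, WithBot.coe_le_coe]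
      by_contra hcon
      exact (Finsupp.mem_support_iff.mp ha) (hcsHigh a (by omega))
    · have hDm : D ∈ cs.support := Finsupp.mem_support_iff.mpr (by rw [hcsD, hlcq]; exact hlcq0)
      rw [Nat.cast_withBot]
      exact Finset.le_max hDm
  have hDb : degl f x (p j) + ([u].map (degl f x)).sum = (D : WithBot ℕ) := by
    show degl f x (p j) + (degl f x u + 0) = _
    rw [hdeglpj, hdeglu, add_zero, Nat.cast_withBot, Nat.cast_withBot, Nat.cast_withBot,
      ← WithBot.coe_add]
    exact congrArg WithBot.some (by omega)
  have hDb2 : degl f x (p j) + ([u, (-1 : S)].map (degl f x)).sum = (D : WithBot ℕ) := by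
    show degl f x (p j) + (degl f x u + (degl f x (-1 : S) + 0)) = _
    rw [hdeglneg, add_zero, hdeglpj, hdeglu, add_zero, Nat.cast_withBot, Nat.cast_withBot,
      Nat.cast_withBot, ← WithBot.coe_add]
    exact congrArg WithBot.some (by omega)
  refine ⟨s, ⟨L, rfl, ?_⟩, ?_⟩
  · rw [hdegls, hL]
    show (D : WithBot ℕ)
      = max (degl f x (p j) + ([u].map (degl f x)).sum)
        (max (degl f x (p j) + ([u, (-1 : S)].map (degl f x)).sum)
          ((L0.map fun t => degl f x (p t.1) + (t.2.map (degl f x)).sum).foldr max ⊥))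
    rw [hDb, hDb2]
    rw [max_eq_left (foldr_max_le (D : WithBot ℕ) _ ?_), max_self]
    intro a ha
    obtain ⟨v, hv, rfl⟩ := List.mem_map.mp ha
    exact hL0b v hv
  · have hqs : q - s = lpoly f x (cq - cs) := by
      rw [lpoly_sub, hcq, hscs]
    rw [hqs, degl_lpoly f x hinj, hdeglq]
    rcases h : (cq - cs).support.max with _ | m
    · rw [Nat.cast_withBot]
      exact WithBot.bot_lt_coe D
    · rw [Nat.cast_withBot]
      have hm : m ∈ (cq - cs).support := Finset.mem_of_max h
      have hne : cq m - cs m ≠ 0 := by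
        have := Finsupp.mem_support_iff.mp hm
        rwa [Finsupp.sub_apply] at this
      have hmD : m < D := by
        by_contra hcon
        push_neg at hcon
        rcases Nat.eq_or_lt_of_le hcon with rfl | hlt
        · rw [hcsD, hlcq, sub_self] at hne
          exact hne rfl
        · rw [hcqHigh m hlt, hcsHigh m hlt, sub_self] at hne
          exact hne rfl
      exact WithBot.coe_lt_coe.mpr hmD
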